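/- Define f(n) = n(n−1) if n is even and f(n) = n² + (n−1)/2 if n is odd. If a graph has at least f(n) edges, then it contains a star with n edges or a matching with n edges (i.e., either a vertex of degree at least n or n pairwise disjoint edges). -/

import Mathlib

open SimpleGraph

/-- The number of subgraphs of `G` isomorphic to `H`. -/
noncomputable def copyCount {α β : Type*} (H : SimpleGraph α) (G : SimpleGraph β) : ℕ :=
  Set.ncard {G' : G.Subgraph | Nonempty (H ≃g G'.coe)}

/-- `G` contains a subgraph isomorphic to `F`. -/
def Contains {α β : Type*} (F : SimpleGraph α) (G : SimpleGraph β) : Prop :=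
  ∃ f : F →g G, Function.Injective f

/-- The generalized Turán number `ex(n, H, F)`: the maximum number of subgraphs
isomorphic to `H` in an `F`-free graph on `n` vertices. -/
noncomputable def exGen {α β : Type*} (n : ℕ) (H : SimpleGraph α) (F : SimpleGraph β) : ℕ :=
  sSup {N | ∃ G : SimpleGraph (Fin n), ¬ Contains F G ∧ N = copyCount H G}

/-- The double star `S_{a,b}`: central edge `0-1`, vertices `2,…,a+1` are leaves
attached to `0`, and vertices `a+2,…,a+b+1` are leaves attached to `1`. -/
def doubleStar (a b : ℕ) : SimpleGraph (Fin (a + b + 2)) :=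
  SimpleGraph.fromRel (fun x y =>
    (x.val = 0 ∧ y.val = 1) ∨ (x.val = 0 ∧ 2 ≤ y.val ∧ y.val < a + 2) ∨
      (x.val = 1 ∧ a + 2 ≤ y.val))
/-- `f(n) = n(n-1)` for even `n` and `f(n) = n² + (n-1)/2` for odd `n`. -/
def ahsBound (n : ℕ) : ℕ := if Even n then n * (n - 1) else n ^ 2 + (n - 1) / 2

/-!
Let every vertex have degree at most `d` and every matching at most `m` edges. Tutte's theorem,
applied to `G` joined with `|V| - 2m - 2` universal vertices, yields the Tutte–Berge bound: a set
`U` with `|V| + |U| ≤ 2m + o(G - U)`, where `o` counts odd components. At most `d|U|` edges meet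
`U`, and a component of `G - U` on `c` vertices has degree sum at most `min(cd, c(c - 1))`, which
is at most `(d + 1)(c - c % 2)`, with room to spare when `d` is odd and `c ≥ 2`. Summing gives
`|E| ≤ m(d + 1)`, strictly when `d` is odd and `G` has an edge; for `d = m = n - 1` this is
below `f(n)`.
-/

namespace Set

lemma ncard_eq_ncard_preimage_inl_add {α β : Type*} [Finite α] [Finite β] {U : Set (α ⊕ β)}
    (hU : ∀ b, .inr b ∈ U) : U.ncard = (Sum.inl ⁻¹' U).ncard + Nat.card β := by
  have hsplit : U = Sum.inl '' (Sum.inl ⁻¹' U) ∪ range Sum.inr := by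
    ext (a | b) <;> simp [hU]
  conv_lhs => rw [hsplit]
  rw [ncard_union_eq ?_ (toFinite _) (toFinite _), ncard_image_of_injective _ Sum.inl_injective,
    ncard_range_of_injective Sum.inr_injective]
  exact isCompl_range_inl_range_inr.disjoint.mono_left (image_subset_range _ _)

end Set

namespace SimpleGraph

variable {V : Type*} {G : SimpleGraph V}

lemma sum_ncard_neighborSet [Fintype V] (G : SimpleGraph V) :
    ∑ v, (G.neighborSet v).ncard = 2 * G.edgeSet.ncard := by
  classical
  simp only [Set.ncard_eq_toFinset_card', Set.toFinset_card, card_neighborSet_eq_degree]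
  rw [sum_degrees_eq_twice_card_edges, ← card_edgeSet]

lemma card_verts_deleteVerts_top_add_ncard [Finite V] (U : Set V) :
    Nat.card ((⊤ : G.Subgraph).deleteVerts U).verts + U.ncard = Nat.card V := by
  rw [Nat.card_coe_set_eq, Subgraph.deleteVerts_verts, Subgraph.verts_top,
    Set.ncard_sdiff (Set.subset_univ U), Set.ncard_univ]
  have := Set.ncard_le_card U
  omega

namespace Subgraph

lemma exists_isMatching_of_unique_adj (N : G.Subgraph)
    (hN : ∀ ⦃v w w'⦄, N.Adj v w → N.Adj v w' → w = w') :
    ∃ M : G.Subgraph, M.IsMatching ∧ M.verts = N.support ∧ M.edgeSet = N.edgeSet :=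
  ⟨{ verts := N.support
     Adj := N.Adj
     adj_sub := N.adj_sub
     edge_vert := fun h => ⟨_, h⟩
     symm := N.symm },
   fun _ ⟨w, hw⟩ => ⟨w, hw, fun _ h => hN h hw⟩, rfl, rfl⟩

lemma IsMatching.exists_isMatching_ncard_edgeSet_eq {M : G.Subgraph} (hM : M.IsMatching)
    {n : ℕ} (hn : n ≤ M.edgeSet.ncard) :
    ∃ M' : G.Subgraph, M'.IsMatching ∧ M'.edgeSet.ncard = n := by
  obtain ⟨S, hSM, rfl⟩ := Set.exists_subset_card_eq hn
  obtain ⟨M', hM', -, hE⟩ := (M.deleteEdges (M.edgeSet \ S)).exists_isMatching_of_unique_adj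
    fun _ _ _ h h' => hM.eq_of_adj_left h.1 h'.1
  refine ⟨M', hM', congrArg Set.ncard (hE.trans ?_)⟩
  ext e
  induction e with
  | _ a b =>
    simp only [Subgraph.mem_edgeSet, deleteEdges_adj, Set.mem_sdiff, not_and, not_not]
    exact ⟨fun h => h.2 h.1, fun h => ⟨hSM h, fun _ => h⟩⟩

lemma IsMatching.ncard_verts_eq_two_mul [Finite V] {M : G.Subgraph} (hM : M.IsMatching) :
    M.verts.ncard = 2 * M.edgeSet.ncard := by
  classical
  have := Fintype.ofFinite V
  have hdeg (v : V) : (M.spanningCoe.neighborSet v).ncard = if v ∈ M.verts then 1 else 0 := by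
    split_ifs with hv
    · obtain ⟨w, hw, huniq⟩ := hM hv
      exact Set.ncard_eq_one.mpr ⟨w, Set.ext fun u => ⟨fun h => huniq u h, fun h => h ▸ hw⟩⟩
    · exact (Set.ncard_eq_zero (s := _)).mpr
        (Set.eq_empty_of_forall_notMem fun w h => hv (M.edge_vert h))
  rw [← edgeSet_spanningCoe, ← sum_ncard_neighborSet, Finset.sum_congr rfl fun v _ => hdeg v,
    Finset.sum_boole, Set.ncard_eq_toFinset_card']
  simp

end Subgraph

lemma Iso.ncard_oddComponents_eq {W : Type*} {H : SimpleGraph W} (φ : G ≃g H) :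
    G.oddComponents.ncard = H.oddComponents.ncard := by
  refine Set.ncard_congr (fun C _ => φ.connectedComponentEquiv C) (fun C hC => ?_)
    (fun _ _ _ _ h => φ.connectedComponentEquiv.injective h)
    (fun C _ => ⟨φ.connectedComponentEquiv.symm C, ?_, by simp⟩)
  · change Odd (φ.connectedComponentEquiv C).supp.ncard
    rwa [← Nat.card_coe_set_eq, ← Nat.card_congr (ConnectedComponent.isoEquivSupp φ C),
      Nat.card_coe_set_eq]
  · change Odd (φ.connectedComponentEquiv.symm C).supp.ncard
    rwa [← Nat.card_coe_set_eq, Nat.card_congr (ConnectedComponent.isoEquivSupp φ _),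
      Equiv.apply_symm_apply, Nat.card_coe_set_eq]

lemma ncard_oddComponents_le_one_of_isUniversal {v : V} (hv : G.IsUniversal v) :
    G.oddComponents.ncard ≤ 1 := by
  have hconn : G.Preconnected := fun a b => by
    have reach (w : V) : G.Reachable v w := by
      obtain rfl | hw := eq_or_ne v w
      exacts [.rfl, (hv hw).reachable]
    exact (reach a).symm.trans (reach b)
  have := hconn.subsingleton_connectedComponent
  exact Set.ncard_le_one_of_subsingleton _

section joinUniversal

def joinUniversal (G : SimpleGraph V) (k : ℕ) : SimpleGraph (V ⊕ Fin k) where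
  Adj
    | .inl x, .inl y => G.Adj x y
    | a, b => a ≠ b
  symm.symm
    | .inl _, .inl _ => G.adj_symm
    | .inl _, .inr _ | .inr _, .inl _ | .inr _, .inr _ => Ne.symm
  loopless := ⟨by rintro (x | i) h; exacts [G.loopless.irrefl x h, h rfl]⟩

variable {k : ℕ}

lemma joinUniversal_adj_inr {i : Fin k} {b : V ⊕ Fin k} :
    (G.joinUniversal k).Adj (.inr i) b ↔ .inr i ≠ b := by
  cases b <;> rfl

lemma exists_isMatching_of_isPerfectMatching_joinUniversal [Finite V]
    {M' : (G.joinUniversal k).Subgraph} (hM' : M'.IsPerfectMatching) :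
    ∃ M : G.Subgraph, M.IsMatching ∧ Nat.card V ≤ k + 2 * M.edgeSet.ncard := by
  let N := M'.comap (⟨Sum.inl, id⟩ : G →g G.joinUniversal k)
  obtain ⟨M, hM, hverts, -⟩ := N.exists_isMatching_of_unique_adj
    fun _ _ _ h h' => Sum.inl_injective (hM'.1.eq_of_adj_left h.2 h'.2)
  have hpartner (x : ↥N.supportᶜ) : ∃ i, M'.Adj (.inl x) (.inr i) := by
    obtain ⟨b, hb, -⟩ := hM'.1 (hM'.2 (.inl x))
    cases b with
    | inl y => exact absurd ⟨y, M'.adj_sub hb, hb⟩ x.2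
    | inr i => exact ⟨i, hb⟩
  choose p hp using hpartner
  have hp_inj : Function.Injective p := fun x y h =>
    Subtype.ext (Sum.inl_injective (hM'.1.eq_of_adj_right (hp x) (h ▸ hp y)))
  have hcompl := Nat.card_le_card_of_injective p hp_inj
  rw [Nat.card_coe_set_eq, Nat.card_fin] at hcompl
  have hedges := hM.ncard_verts_eq_two_mul
  rw [hverts] at hedges
  refine ⟨M, hM, ?_⟩
  rw [← Set.ncard_add_ncard_compl N.support]
  omega

lemma inr_mem_of_isTutteViolator_joinUniversal [Finite V] {U : Set (V ⊕ Fin k)}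
    (hU : (G.joinUniversal k).IsTutteViolator U) (heven : Even (Nat.card V + k)) (i : Fin k) :
    .inr i ∈ U := by
  by_contra hi
  have hle := ncard_oddComponents_le_one_of_isUniversal
    (G := ((⊤ : (G.joinUniversal k).Subgraph).deleteVerts U).coe)
    (v := ⟨.inr i, trivial, hi⟩) fun w hw => by
      simpa [Subtype.ext_iff, hi, w.2.2, joinUniversal_adj_inr] using hw
  unfold IsTutteViolator at hU
  obtain rfl : U = ∅ := (Set.ncard_eq_zero (s := U)).mp (by omega)
  have hodd := odd_ncard_oddComponents ((⊤ : (G.joinUniversal k).Subgraph).deleteVerts ∅).coe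
  have hcard := card_verts_deleteVerts_top_add_ncard (G := G.joinUniversal k) ∅
  simp only [Nat.card_sum, Nat.card_fin, Set.ncard_empty, Nat.odd_iff] at hodd hcard
  rw [Nat.even_iff] at heven
  omega

lemma ncard_oddComponents_deleteVerts_joinUniversal {U : Set (V ⊕ Fin k)}
    (hU : ∀ i, .inr i ∈ U) :
    ((⊤ : (G.joinUniversal k).Subgraph).deleteVerts U).coe.oddComponents.ncard =
      ((⊤ : G.Subgraph).deleteVerts (Sum.inl ⁻¹' U)).coe.oddComponents.ncard := by
  let e : ((⊤ : G.Subgraph).deleteVerts (Sum.inl ⁻¹' U)).verts ≃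
      ((⊤ : (G.joinUniversal k).Subgraph).deleteVerts U).verts :=
    Equiv.ofBijective (fun x => ⟨.inl x, trivial, x.2.2⟩)
      ⟨fun x y h => Subtype.ext (Sum.inl_injective (congrArg Subtype.val h)), by
        rintro ⟨x | i, hx⟩
        · exact ⟨⟨x, trivial, hx.2⟩, rfl⟩
        · exact absurd (hU i) hx.2⟩
  exact (Iso.ncard_oddComponents_eq (⟨e, Iff.rfl⟩ : _ ≃g _)).symm

end joinUniversal

theorem exists_card_add_ncard_le_two_mul_add_ncard_oddComponents [Finite V] {m : ℕ}
    (hm : ∀ M : G.Subgraph, M.IsMatching → M.edgeSet.ncard ≤ m) :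
    ∃ U : Set V, Nat.card V + U.ncard ≤
      2 * m + ((⊤ : G.Subgraph).deleteVerts U).coe.oddComponents.ncard := by
  by_cases hV : Nat.card V ≤ 2 * m + 1
  · refine ⟨∅, ?_⟩
    have hodd := odd_ncard_oddComponents ((⊤ : G.Subgraph).deleteVerts ∅).coe
    have hcard := card_verts_deleteVerts_top_add_ncard (G := G) ∅
    simp only [Set.ncard_empty, Nat.odd_iff] at hodd hcard ⊢
    omega
  -- `|V| + k` is even, and a perfect matching of the join would match at least
  -- `|V| - k = 2m + 2` vertices of `G` among themselves.
  set k := Nat.card V - 2 * m - 2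
  have hnpm (M' : (G.joinUniversal k).Subgraph) : ¬ M'.IsPerfectMatching := fun hM' => by
    obtain ⟨M, hM, hcard⟩ := exists_isMatching_of_isPerfectMatching_joinUniversal hM'
    have := hm M hM
    omega
  obtain ⟨U, hU⟩ : ∃ U, (G.joinUniversal k).IsTutteViolator U := by
    by_contra! h
    exact (tutte.mpr h).elim hnpm
  have hinr := inr_mem_of_isTutteViolator_joinUniversal hU ⟨Nat.card V - m - 1, by omega⟩
  refine ⟨Sum.inl ⁻¹' U, ?_⟩
  have hodd := odd_ncard_oddComponents ((⊤ : (G.joinUniversal k).Subgraph).deleteVerts U).coe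
  have hcard := card_verts_deleteVerts_top_add_ncard (G := G.joinUniversal k) U
  unfold IsTutteViolator at hU
  rw [ncard_oddComponents_deleteVerts_joinUniversal hinr] at hU hodd
  rw [Set.ncard_eq_ncard_preimage_inl_add hinr] at hU hcard
  simp only [Nat.card_sum, Nat.card_fin, Nat.odd_iff] at hU hodd hcard
  omega

lemma ConnectedComponent.ncard_neighborSet_lt [Finite V] {C : G.ConnectedComponent} {x : V}
    (hx : x ∈ C.supp) : (G.neighborSet x).ncard < C.supp.ncard :=
  Set.ncard_lt_ncard ⟨fun _ hy => C.mem_supp_of_adj_mem_supp hx hy,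
    fun h => G.loopless.irrefl x (h hx)⟩

lemma ConnectedComponent.sum_ncard_neighborSet_add_le [Finite V] {d : ℕ}
    (hdeg : ∀ v, (G.neighborSet v).ncard ≤ d) (C : G.ConnectedComponent) [Fintype C.supp] :
    ∑ x ∈ C.supp.toFinset, (G.neighborSet x).ncard + (if Odd d ∧ 2 ≤ C.supp.ncard then 1 else 0) +
      (if Odd C.supp.ncard then d + 1 else 0) ≤ (d + 1) * C.supp.ncard := by
  set c := C.supp.ncard
  have hcard : C.supp.toFinset.card = c := (Set.ncard_eq_toFinset_card' _).symm
  have hc : 0 < c := (Set.ncard_pos).mpr C.nonempty_supp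
  have hsd : ∑ x ∈ C.supp.toFinset, (G.neighborSet x).ncard ≤ c * d := by
    simpa [hcard] using Finset.sum_le_card_nsmul C.supp.toFinset _ d fun x _ => hdeg x
  have hsc : ∑ x ∈ C.supp.toFinset, (G.neighborSet x).ncard ≤ c * (c - 1) := by
    simpa [hcard] using Finset.sum_le_card_nsmul C.supp.toFinset _ (c - 1) fun x hx =>
      Nat.le_sub_one_of_lt (ncard_neighborSet_lt (Set.mem_toFinset.mp hx))
  generalize ∑ x ∈ C.supp.toFinset, (G.neighborSet x).ncard = s at hsd hsc ⊢
  clear_value c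
  obtain ⟨a, rfl | rfl⟩ := Nat.even_or_odd' c <;> obtain ⟨b, rfl | rfl⟩ := Nat.even_or_odd' d <;>
    simp only [Nat.odd_iff, Nat.add_sub_cancel] at * <;> split_ifs <;>
    rcases le_or_gt a b with h | h <;> first | omega | nlinarith

lemma two_mul_ncard_edgeSet_add_le [Fintype V] {d : ℕ} (hdeg : ∀ v, (G.neighborSet v).ncard ≤ d) :
    2 * G.edgeSet.ncard + (if Odd d ∧ 0 < G.edgeSet.ncard then 1 else 0) +
      (d + 1) * G.oddComponents.ncard ≤ (d + 1) * Nat.card V := by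
  classical
  have hfiber (f : V → ℕ) :
      ∑ C : G.ConnectedComponent, ∑ x ∈ C.supp.toFinset, f x = ∑ x, f x := by
    rw [← Finset.sum_fiberwise Finset.univ G.connectedComponentMk f]
    refine Finset.sum_congr rfl fun C _ => Finset.sum_congr ?_ fun _ _ => rfl
    ext x
    simp [ConnectedComponent.mem_supp_iff]
  have hcard : ∑ C : G.ConnectedComponent, (d + 1) * C.supp.ncard = (d + 1) * Nat.card V := by
    simpa [← Finset.mul_sum, Set.ncard_eq_toFinset_card'] using hfiber 1
  have hodd : ∑ C : G.ConnectedComponent, (if Odd C.supp.ncard then d + 1 else 0) =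
      (d + 1) * G.oddComponents.ncard := by
    rw [Finset.sum_ite, Finset.sum_const_zero, Finset.sum_const, smul_eq_mul, mul_comm,
      add_zero, Set.ncard_eq_toFinset_card']
    congr 2
    ext
    simp
  have hedge : (if Odd d ∧ 0 < G.edgeSet.ncard then 1 else 0) ≤
      ∑ C : G.ConnectedComponent, (if Odd d ∧ 2 ≤ C.supp.ncard then 1 else 0) := by
    split_ifs with h
    · obtain ⟨hd, hpos⟩ := h
      obtain ⟨e, he⟩ := Set.nonempty_of_ncard_ne_zero hpos.ne'
      induction e using Sym2.ind with
      | _ x y =>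
      have hxy : ({x, y} : Set V) ⊆ (G.connectedComponentMk x).supp := by
        rintro z (rfl | rfl)
        exacts [rfl, (ConnectedComponent.connectedComponentMk_eq_of_adj he).symm]
      have h2 := Set.ncard_pair he.ne ▸ Set.ncard_le_ncard hxy
      exact le_trans (by simp [hd, h2]) (Finset.single_le_sum (fun _ _ => Nat.zero_le _)
        (Finset.mem_univ (G.connectedComponentMk x)))
    · exact Nat.zero_le _
  have key := Finset.sum_le_sum (s := Finset.univ) fun (C : G.ConnectedComponent) _ =>
    C.sum_ncard_neighborSet_add_le hdeg
  simp only [Finset.sum_add_distrib, hfiber, sum_ncard_neighborSet] at key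
  omega

lemma ncard_edgeSet_le_mul_add_ncard_edgeSet_deleteVerts [Finite V] {d : ℕ}
    (hdeg : ∀ v, (G.neighborSet v).ncard ≤ d) (U : Set V) :
    G.edgeSet.ncard ≤ d * U.ncard + ((⊤ : G.Subgraph).deleteVerts U).coe.edgeSet.ncard := by
  classical
  have := Fintype.ofFinite V
  set K := ((⊤ : G.Subgraph).deleteVerts U).coe
  have hsub : G.edgeSet ⊆
      (⋃ u ∈ U.toFinset, G.incidenceSet u) ∪ Sym2.map Subtype.val '' K.edgeSet := by
    intro e he
    induction e using Sym2.ind with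
    | _ a b =>
    by_cases ha : a ∈ U
    · exact .inl (Set.mem_biUnion (Set.mem_toFinset.mpr ha) ⟨he, Sym2.mem_mk_left a b⟩)
    by_cases hb : b ∈ U
    · exact .inl (Set.mem_biUnion (Set.mem_toFinset.mpr hb) ⟨he, Sym2.mem_mk_right a b⟩)
    exact .inr ⟨s(⟨a, trivial, ha⟩, ⟨b, trivial, hb⟩), by simpa [K, ha, hb] using he, rfl⟩
  have hinc : ∑ u ∈ U.toFinset, (G.incidenceSet u).ncard ≤ d * U.ncard := by
    rw [Set.ncard_eq_toFinset_card', mul_comm]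
    exact Finset.sum_le_card_nsmul _ _ d fun u _ =>
      (Nat.card_congr (G.incidenceSetEquivNeighborSet u)).le.trans (hdeg u)
  calc G.edgeSet.ncard
      ≤ (⋃ u ∈ U.toFinset, G.incidenceSet u).ncard + (Sym2.map Subtype.val '' K.edgeSet).ncard :=
        (Set.ncard_le_ncard hsub).trans (Set.ncard_union_le _ _)
    _ ≤ d * U.ncard + K.edgeSet.ncard :=
        add_le_add ((Finset.set_ncard_biUnion_le _ _).trans hinc) (Set.ncard_image_le (Set.toFinite _))

theorem ncard_edgeSet_add_le_mul [Finite V] {d m : ℕ} (hdeg : ∀ v, (G.neighborSet v).ncard ≤ d)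
    (hm : ∀ M : G.Subgraph, M.IsMatching → M.edgeSet.ncard ≤ m) :
    G.edgeSet.ncard + (if Odd d ∧ 0 < G.edgeSet.ncard then 1 else 0) ≤ m * (d + 1) := by
  classical
  have := Fintype.ofFinite V
  obtain ⟨U, hU⟩ := exists_card_add_ncard_le_two_mul_add_ncard_oddComponents hm
  set K := ((⊤ : G.Subgraph).deleteVerts U).coe
  have hdegK (x : ((⊤ : G.Subgraph).deleteVerts U).verts) : (K.neighborSet x).ncard ≤ d := by
    rw [← Set.ncard_image_of_injective _ Subtype.val_injective]
    refine (Set.ncard_le_ncard ?_).trans (hdeg x)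
    rintro _ ⟨y, hy, rfl⟩
    rw [mem_neighborSet, Subgraph.coe_adj] at hy
    exact hy.adj_sub
  have hK := two_mul_ncard_edgeSet_add_le hdegK
  have hGK : G.edgeSet.ncard ≤ d * U.ncard + K.edgeSet.ncard :=
    ncard_edgeSet_le_mul_add_ncard_edgeSet_deleteVerts hdeg U
  have hcard := card_verts_deleteVerts_top_add_ncard (G := G) U
  have hmul := Nat.mul_le_mul_left (d + 1)
    (show Nat.card ((⊤ : G.Subgraph).deleteVerts U).verts + 2 * U.ncard ≤
      2 * m + K.oddComponents.ncard by omega)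
  have key : 2 * G.edgeSet.ncard + 2 * U.ncard + (if Odd d ∧ 0 < K.edgeSet.ncard then 1 else 0) ≤
      2 * (m * (d + 1)) := by
    nlinarith
  rcases Nat.eq_zero_or_pos U.ncard with hU0 | hUpos
  · rw [hU0, mul_zero, zero_add] at hGK
    by_cases hd : Odd d
    · simp only [hd, true_and] at key ⊢
      split_ifs at key ⊢ <;> omega
    · simp only [hd, false_and, if_false] at key ⊢
      omega
  · split_ifs at key ⊢ <;> omega

end SimpleGraph

/-- Abbott–Hanson–Sauer: a graph with at least `f(n)` edges contains a
star with `n` edges or a matching with `n` edges. -/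
theorem star_or_matching_of_many_edges {V : Type*} [Fintype V] (n : ℕ)
    (G : SimpleGraph V) (h : ahsBound n ≤ G.edgeSet.ncard) :
    (∃ v : V, n ≤ (G.neighborSet v).ncard) ∨
      (∃ M : G.Subgraph, M.IsMatching ∧ M.edgeSet.ncard = n) := by
  by_contra! hcon
  obtain ⟨hstar, hmatch⟩ := hcon
  obtain _ | m := n
  · exact hmatch ⊥ (fun _ hv => hv.elim) (by simp)
  have hm (M : G.Subgraph) (hM : M.IsMatching) : M.edgeSet.ncard ≤ m := by
    by_contra! hlt
    obtain ⟨M', hM', hcard⟩ := hM.exists_isMatching_ncard_edgeSet_eq hlt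
    exact hmatch M' hM' hcard
  have hbound := ncard_edgeSet_add_le_mul (fun v => Nat.lt_succ_iff.mp (hstar v)) hm
  unfold ahsBound at h
  rw [Nat.add_sub_cancel] at h
  split_ifs at h with hn
  · have hm : Odd m := by simpa [Nat.even_add_one] using hn
    have hpos : 0 < G.edgeSet.ncard := (Nat.mul_pos m.succ_pos hm.pos).trans_le h
    rw [if_pos ⟨hm, hpos⟩] at hbound
    nlinarith
  · have hsq : (m + 1) ^ 2 ≤ G.edgeSet.ncard := (Nat.le_add_right _ _).trans h
    have := (Nat.le_add_right G.edgeSet.ncard _).trans hbound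
    nlinarith
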